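/- Let r, a, b, c be natural numbers, let A be a b × a matrix and B a c × b matrix with entries in MvPolynomial (Fin r) ℂ with B * A = 0, and let μ be the product over Fin r of the normalized Haar probability measures on AddCircle 1 = ℝ/ℤ. For a torus point z : Fin r → AddCircle 1 let ev z : Fin r → ℂ be given by (ev z) i = the point of the unit circle corresponding to z i (the image of z i under the canonical map AddCircle 1 → S¹ ⊂ ℂ). Then the set of torus points z for which rank A(ev z) + rank B(ev z) is not maximal, i.e. {z | ∃ w : Fin r → ℂ, rank A(ev z) + rank B(ev z) < rank A(w) + rank B(w)}, has μ-measure zero. Consequently the middle homology dimension b − rank A(ev z) − rank B(ev z) equals its generic (minimal) value for μ-almost every torus point z. -/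

import Mathlib

/-!
A matrix over `MvPolynomial σ ℂ` has rank at least `k` wherever some `k × k` minor does not
vanish. Taking `w₀` where `rank A + rank B` is maximal and the product `p` of a nonzero
`rank A(w₀)`-minor of `A` and a nonzero `rank B(w₀)`-minor of `B`, the non-generic torus points
lie in the zero set of the nonzero polynomial `p`. That zero set is null for any product of
atomless measures pulled back along an injective map to `ℂ`, by induction on the number of
variables and Fubini: off a null set of the last coordinates the leading coefficient in the first
variable survives, leaving finitely many roots in the first coordinate.
-/

open MeasureTheory

namespace Matrix

variable {m n K : Type*} [Fintype n] [Field K]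

theorem exists_linearIndependent_row_submatrix [Fintype m] (M : Matrix m n K) :
    ∃ f : Fin M.rank → m, LinearIndependent K (M.submatrix f id).row := by
  obtain ⟨v, hv, -, hli⟩ := Submodule.exists_fun_fin_finrank_span_eq K (Set.range M.row)
  choose f hf using hv
  rw [M.rank_eq_finrank_span_row]
  have hrow : (M.submatrix f id).row = v := funext hf
  exact ⟨f, hrow ▸ hli⟩

theorem exists_det_submatrix_ne_zero [Fintype m] (M : Matrix m n K) :
    ∃ (f : Fin M.rank → m) (g : Fin M.rank → n), (M.submatrix f g).det ≠ 0 := by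
  obtain ⟨f, hf⟩ := M.exists_linearIndependent_row_submatrix
  have hrank : (M.submatrix f id)ᵀ.rank = M.rank := by
    rw [rank_transpose, hf.rank_matrix, Fintype.card_fin]
  have hcols := (M.submatrix f id)ᵀ.exists_linearIndependent_row_submatrix
  rw [hrank] at hcols
  obtain ⟨g, hg⟩ := hcols
  refine ⟨f, g, ?_⟩
  rw [← det_transpose]
  exact ((isUnit_iff_isUnit_det _).mp (linearIndependent_rows_iff_isUnit.mp hg)).ne_zero

theorem le_rank_of_det_submatrix_ne_zero {R : Type*} [CommRing R] [IsDomain R] {k : ℕ}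
    (M : Matrix m n R) (f : Fin k → m) (g : Fin k → n) (h : (M.submatrix f g).det ≠ 0) :
    k ≤ M.rank := by
  simpa [rank_of_det_ne_zero h] using M.rank_submatrix_le f g

theorem exists_map_ne_zero_forall_rank_map_le [Fintype m] {R : Type*} [CommRing R]
    (M : Matrix m n R) (φ₀ : R →+* K) :
    ∃ p : R, φ₀ p ≠ 0 ∧ ∀ φ : R →+* K, φ p ≠ 0 → (M.map φ₀).rank ≤ (M.map φ).rank := by
  obtain ⟨f, g, hfg⟩ := (M.map φ₀).exists_det_submatrix_ne_zero
  have hdet (φ : R →+* K) : φ (M.submatrix f g).det = ((M.map φ).submatrix f g).det := by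
    rw [RingHom.map_det, RingHom.mapMatrix_apply, submatrix_map]
  refine ⟨(M.submatrix f g).det, by rwa [hdet], fun φ hφ => ?_⟩
  exact le_rank_of_det_submatrix_ne_zero _ f g (by rwa [← hdet])

end Matrix

instance AddCircle.nullSingletonClass_volume {T : ℝ} [Fact (0 < T)] :
    NullSingletonClass (volume : Measure (AddCircle T)) where
  measure_singleton x := by
    simpa using AddCircle.volume_closedBall (T := T) (x := x) 0

namespace MvPolynomial

theorem measurable_eval {R σ : Type*} [CommSemiring R] [MeasurableSpace R] [MeasurableAdd₂ R]
    [MeasurableMul₂ R] (P : MvPolynomial σ R) : Measurable fun v : σ → R => eval v P := by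
  induction P using MvPolynomial.induction_on with
  | C a => simp only [eval_C]; exact measurable_const
  | add p q hp hq => simp only [map_add]; exact hp.add hq
  | mul_X p i hp => simp only [map_mul, eval_X]; exact hp.mul (measurable_pi_apply i)

variable {K : Type*} [CommRing K] [IsDomain K] [MeasurableSpace K] [MeasurableAdd₂ K]
  [MeasurableMul₂ K] [MeasurableSingletonClass K] {X : Type*} [MeasurableSpace X] (μ : Measure X)
  [SigmaFinite μ] [NullSingletonClass μ] {f : X → K}

theorem measure_pi_setOf_eval_comp_eq_zero (hf : Measurable f) (hinj : f.Injective) :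
    ∀ {n : ℕ} {P : MvPolynomial (Fin n) K}, P ≠ 0 →
      Measure.pi (fun _ : Fin n => μ) {x | eval (f ∘ x) P = 0} = 0
  | 0, P, hP => by
    obtain ⟨c, rfl⟩ := C_surjective (Fin 0) P
    simp_all
  | n + 1, P, hP => by
    set S := {x : Fin (n + 1) → X | eval (f ∘ x) P = 0}
    have hS : MeasurableSet S :=
      (measurable_eval P).comp (measurable_pi_lambda _ fun i => hf.comp (measurable_pi_apply i))
        (measurableSet_singleton 0)
    set e := MeasurableEquiv.piFinSuccAbove (fun _ : Fin (n + 1) => X) 0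
    set T := Prod.swap ⁻¹' (e.symm ⁻¹' S)
    have hT : MeasurableSet T := e.symm.measurable.comp measurable_swap hS
    have hST : Measure.pi (fun _ => μ) S = ((Measure.pi fun _ : Fin n => μ).prod μ) T := by
      rw [← ((measurePreserving_piFinSuccAbove (fun _ => μ) 0).symm e).measure_preimage
        hS.nullMeasurableSet,
        ← Measure.measurePreserving_swap.measure_preimage hT.nullMeasurableSet]
      rfl
    set Q := finSuccEquiv K n P
    have hQ : Q ≠ 0 := by simpa [Q] using hP
    rw [hST, Measure.measure_prod_null hT]
    filter_upwards [compl_mem_ae_iff.mpr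
      (measure_pi_setOf_eval_comp_eq_zero hf hinj (Polynomial.leadingCoeff_ne_zero.mpr hQ))]
      with y hy
    have hq : Q.map (eval (f ∘ y)) ≠ 0 := by
      intro h
      exact hy (by simpa using congrArg (·.coeff Q.natDegree) h)
    refine measure_mono_null (fun θ hθ => ?_)
      ((Polynomial.finite_setOfPred_isRoot hq).preimage hinj.injOn |>.measure_zero μ)
    have hcons : e.symm (θ, y) = Fin.cons θ y := Fin.insertNth_zero' θ y
    change eval (f ∘ e.symm (θ, y)) P = 0 at hθ
    rwa [hcons, Fin.comp_cons, eval_eq_eval_mv_eval'] at hθ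

end MvPolynomial

theorem non_generic_homology_torus_null_general
    (r a b c : ℕ)
    (A : Matrix (Fin b) (Fin a) (MvPolynomial (Fin r) ℂ))
    (B : Matrix (Fin c) (Fin b) (MvPolynomial (Fin r) ℂ)) :
    (Measure.pi fun _ : Fin r => (volume : Measure (AddCircle (1 : ℝ))))
      {z : Fin r → AddCircle (1 : ℝ) |
        ∃ w : Fin r → ℂ,
          (A.map (MvPolynomial.eval fun i => (AddCircle.toCircle (z i) : ℂ))).rank +
              (B.map (MvPolynomial.eval fun i => (AddCircle.toCircle (z i) : ℂ))).rank <
            (A.map (MvPolynomial.eval w)).rank + (B.map (MvPolynomial.eval w)).rank} = 0 := by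
  set ρ : (Fin r → ℂ) → ℕ := fun w =>
    (A.map (MvPolynomial.eval w)).rank + (B.map (MvPolynomial.eval w)).rank
  have hbdd : BddAbove (Set.range ρ) := ⟨a + b, by
    rintro _ ⟨w, rfl⟩
    simpa using add_le_add (A.map (MvPolynomial.eval w)).rank_le_width
      (B.map (MvPolynomial.eval w)).rank_le_width⟩
  obtain ⟨_, ⟨w₀, rfl⟩, hw₀⟩ := hbdd.exists_isGreatest_of_nonempty (Set.range_nonempty ρ)
  obtain ⟨pA, hpA₀, hpA⟩ := A.exists_map_ne_zero_forall_rank_map_le (MvPolynomial.eval w₀)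
  obtain ⟨pB, hpB₀, hpB⟩ := B.exists_map_ne_zero_forall_rank_map_le (MvPolynomial.eval w₀)
  have hP : pA * pB ≠ 0 := fun h => mul_ne_zero hpA₀ hpB₀ (by rw [← map_mul, h, map_zero])
  have hcircle : Measurable fun θ : AddCircle (1 : ℝ) => (AddCircle.toCircle θ : ℂ) :=
    (continuous_subtype_val.comp AddCircle.continuous_toCircle).measurable
  have hinj : Function.Injective fun θ : AddCircle (1 : ℝ) => (AddCircle.toCircle θ : ℂ) :=
    Subtype.val_injective.comp (AddCircle.injective_toCircle one_ne_zero)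
  refine measure_mono_null (fun z ⟨w, hw⟩ => by_contra fun hz => ?_)
    (MvPolynomial.measure_pi_setOf_eval_comp_eq_zero volume hcircle hinj hP)
  have hz' : MvPolynomial.eval (fun i => (AddCircle.toCircle (z i) : ℂ)) (pA * pB) ≠ 0 := hz
  rw [map_mul] at hz'
  have hρ : ρ w₀ ≤ ρ fun i => (AddCircle.toCircle (z i) : ℂ) :=
    add_le_add (hpA _ (left_ne_zero_of_mul hz')) (hpB _ (right_ne_zero_of_mul hz'))
  exact (hρ.trans_lt hw).not_ge (hw₀ ⟨w, rfl⟩)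

/-- For a two-step complex of matrices of polynomials with `B * A = 0`, the set of points
of the torus `(ℝ/ℤ)^r` (identified with `(S¹)^r ⊂ (ℂ*)^r` via `AddCircle.toCircle`) where
`rank A + rank B` fails to be maximal has measure zero for the product of the normalized
Haar probability measures; hence the middle homology dimension `b - rank A - rank B`
equals its generic (minimal) value almost everywhere on the torus. -/
theorem non_generic_homology_torus_null
    (r a b c : ℕ)
    (A : Matrix (Fin b) (Fin a) (MvPolynomial (Fin r) ℂ))
    (B : Matrix (Fin c) (Fin b) (MvPolynomial (Fin r) ℂ))
    (hBA : B * A = 0) :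
    (Measure.pi fun _ : Fin r => (volume : Measure (AddCircle (1 : ℝ))))
      {z : Fin r → AddCircle (1 : ℝ) |
        ∃ w : Fin r → ℂ,
          (A.map (MvPolynomial.eval fun i => (AddCircle.toCircle (z i) : ℂ))).rank +
              (B.map (MvPolynomial.eval fun i => (AddCircle.toCircle (z i) : ℂ))).rank <
            (A.map (MvPolynomial.eval w)).rank + (B.map (MvPolynomial.eval w)).rank} = 0 :=
  non_generic_homology_torus_null_general r a b c A B
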